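/- Let (A,m) be a 2-multiarrangement with A = {H_1,…,H_n}, m_i = m(H_i) > 0, and |m| = Σ_i m_i. If n ≥ |m|/2 + 1, then the exponents of (A,m) are (|m|−n+1, n−1). -/

import Mathlib

open MvPolynomial
open scoped Function

/-- The linear form `α = Σ_j a_j x_j` with coefficient vector `a`. -/
noncomputable def linForm {K : Type} [Field K] {ℓ : ℕ} (a : Fin ℓ → K) :
    MvPolynomial (Fin ℓ) K :=
  ∑ j, C (a j) * X j

/-- Application `θ(α) = Σ_j a_j f_j` of a derivation `θ = Σ f_j ∂_{x_j}` to the linear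
form with coefficient vector `a`, as a linear map in `θ`. -/
noncomputable def appL {K : Type} [Field K] {ℓ : ℕ} (a : Fin ℓ → K) :
    (Fin ℓ → MvPolynomial (Fin ℓ) K) →ₗ[MvPolynomial (Fin ℓ) K] MvPolynomial (Fin ℓ) K :=
  ∑ j, (C (a j) : MvPolynomial (Fin ℓ) K) • (LinearMap.proj j :
    (Fin ℓ → MvPolynomial (Fin ℓ) K) →ₗ[MvPolynomial (Fin ℓ) K] MvPolynomial (Fin ℓ) K)

/-- The logarithmic derivation module `D(A,m)` of the multiarrangement with defining
forms `c i` and multiplicities `m i`. -/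
noncomputable def Dlog {K : Type} [Field K] {ℓ : ℕ} {η : Type} (c : η → Fin ℓ → K)
    (m : η → ℕ) :
    Submodule (MvPolynomial (Fin ℓ) K) (Fin ℓ → MvPolynomial (Fin ℓ) K) where
  carrier := {θ | ∀ i, linForm (c i) ^ m i ∣ appL (c i) θ}
  add_mem' := fun ha hb i => by rw [map_add]; exact dvd_add (ha i) (hb i)
  zero_mem' := fun i => by rw [map_zero]; exact dvd_zero _
  smul_mem' := fun s θ h i => by rw [map_smul, smul_eq_mul]; exact (h i).mul_left s

/-! ### Auxiliary lemmas -/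

section Aux

variable {K : Type} [Field K]

local notation "P" => MvPolynomial (Fin 2) K

lemma appL_apply (a : Fin 2 → K) (θ : Fin 2 → P) :
    appL a θ = C (a 0) * θ 0 + C (a 1) * θ 1 := by
  simp [appL, Fin.sum_univ_two, smul_eq_mul]

lemma linForm_eq (a : Fin 2 → K) : (linForm a : P) = C (a 0) * X 0 + C (a 1) * X 1 := by
  simp [linForm, Fin.sum_univ_two]

lemma linForm_isHomogeneous (a : Fin 2 → K) : (linForm a : P).IsHomogeneous 1 := by
  rw [linForm_eq]
  exact (isHomogeneous_C_mul_X _ _).add (isHomogeneous_C_mul_X _ _)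

lemma prime_X_fin2 (j : Fin 2) : Prime (X j : P) := by
  have h0 : Prime (X 0 : P) := by
    have := (MulEquiv.prime_iff (MvPolynomial.finSuccEquiv K 1).toMulEquiv (p := (X 0 : P))).symm
    rw [this]
    simpa [MvPolynomial.finSuccEquiv_X_zero] using
      (Polynomial.prime_X : Prime (Polynomial.X : Polynomial (MvPolynomial (Fin 1) K)))
  have hswap : Prime (X 1 : P) := by
    have := (MulEquiv.prime_iff (MvPolynomial.renameEquiv K (Equiv.swap (0 : Fin 2) 1)).toMulEquiv
      (p := (X 1 : P))).symm
    rw [this]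
    simpa [MvPolynomial.renameEquiv_apply, MvPolynomial.rename_X] using h0
  fin_cases j <;> assumption

lemma aeval_isHomogeneous {p : P} {n : ℕ} (hp : p.IsHomogeneous n)
    (g : Fin 2 → P) (hg : ∀ i, (g i).IsHomogeneous 1) :
    (aeval g p).IsHomogeneous n := by
  simpa using hp.aeval g hg

private lemma comb (a b p q r s : K) :
    (C a : P) * (C p * X 0 + C q * X 1) + C b * (C r * X 0 + C s * X 1)
      = C (a * p + b * r) * X 0 + C (a * q + b * s) * X 1 := by
  simp only [map_add, map_mul]; ring

private lemma aeval_lin (u0 u1 : P) (p q : K) :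
    aeval ![u0, u1] ((C p : P) * X 0 + C q * X 1) = C p * u0 + C q * u1 := by
  simp [map_add, map_mul, algebraMap_eq]

lemma exists_linengine (a : Fin 2 → K) (ha : a ≠ 0) :
    ∃ σ : P ≃ₐ[K] P, σ (X 0) = linForm a ∧
      (∀ (p : P) (n : ℕ), p.IsHomogeneous n → (σ p).IsHomogeneous n) ∧
      (∀ (p : P) (n : ℕ), p.IsHomogeneous n → (σ.symm p).IsHomogeneous n) := by
  obtain ⟨d, e, hde⟩ : ∃ d e : K, a 0 * e - a 1 * d ≠ 0 := by
    rcases eq_or_ne (a 0) 0 with h0 | h0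
    · refine ⟨1, 0, ?_⟩
      have h1 : a 1 ≠ 0 := by
        intro h1; apply ha; funext j; fin_cases j <;> simp [h0, h1]
      simpa [h0] using h1
    · exact ⟨0, 1, by simpa using h0⟩
  set Δ : K := a 0 * e - a 1 * d with hΔ
  set u0 : P := C (a 0) * X 0 + C (a 1) * X 1 with hu0
  set u1 : P := C d * X 0 + C e * X 1 with hu1
  set v0 : P := C (Δ⁻¹ * e) * X 0 + C (-(Δ⁻¹ * a 1)) * X 1 with hv0
  set v1 : P := C (-(Δ⁻¹ * d)) * X 0 + C (Δ⁻¹ * a 0) * X 1 with hv1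
  have hX0 : (X 0 : P) = C 1 * X 0 + C 0 * X 1 := by simp
  have hX1 : (X 1 : P) = C 0 * X 0 + C 1 * X 1 := by simp
  set φ : P →ₐ[K] P := aeval ![u0, u1] with hφ
  set ψ : P →ₐ[K] P := aeval ![v0, v1] with hψ
  have c1 : Δ⁻¹ * e * a 0 + -(Δ⁻¹ * a 1) * d = 1 := by field_simp; ring
  have c2 : Δ⁻¹ * e * a 1 + -(Δ⁻¹ * a 1) * e = 0 := by ring
  have c3 : -(Δ⁻¹ * d) * a 0 + Δ⁻¹ * a 0 * d = 0 := by ring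
  have c4 : -(Δ⁻¹ * d) * a 1 + Δ⁻¹ * a 0 * e = 1 := by field_simp; ring
  have c5 : a 0 * (Δ⁻¹ * e) + a 1 * (-(Δ⁻¹ * d)) = 1 := by field_simp; ring
  have c6 : a 0 * (-(Δ⁻¹ * a 1)) + a 1 * (Δ⁻¹ * a 0) = 0 := by ring
  have c7 : d * (Δ⁻¹ * e) + e * (-(Δ⁻¹ * d)) = 0 := by ring
  have c8 : d * (-(Δ⁻¹ * a 1)) + e * (Δ⁻¹ * a 0) = 1 := by field_simp; ring
  have key1 : φ.comp ψ = AlgHom.id K P := by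
    apply algHom_ext
    intro j
    fin_cases j
    · show φ (ψ (X 0)) = X 0
      have : ψ (X 0) = v0 := by simp [hψ]
      rw [this, hv0, aeval_lin, hu0, hu1, comb, c1, c2, ← hX0]
    · show φ (ψ (X 1)) = X 1
      have : ψ (X 1) = v1 := by simp [hψ]
      rw [this, hv1, aeval_lin, hu0, hu1, comb, c3, c4, ← hX1]
  have key2 : ψ.comp φ = AlgHom.id K P := by
    apply algHom_ext
    intro j
    fin_cases j
    · show ψ (φ (X 0)) = X 0
      have : φ (X 0) = u0 := by simp [hφ]
      rw [this, hu0, aeval_lin, hv0, hv1, comb, c5, c6, ← hX0]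
    · show ψ (φ (X 1)) = X 1
      have : φ (X 1) = u1 := by simp [hφ]
      rw [this, hu1, aeval_lin, hv0, hv1, comb, c7, c8, ← hX1]
  refine ⟨AlgEquiv.ofAlgHom φ ψ key1 key2, ?_, ?_, ?_⟩
  · show φ (X 0) = linForm a
    rw [linForm_eq]; simp [hφ, hu0]
  · intro p n hp
    exact aeval_isHomogeneous hp _ (by
      intro i; fin_cases i
      · simpa [hu0] using
          ((isHomogeneous_C_mul_X (a 0) (0:Fin 2)).add (isHomogeneous_C_mul_X (a 1) 1))
      · simpa [hu1] using
          ((isHomogeneous_C_mul_X d (0:Fin 2)).add (isHomogeneous_C_mul_X e 1)))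
  · intro p n hp
    exact aeval_isHomogeneous hp _ (by
      intro i; fin_cases i
      · simpa [hv0] using ((isHomogeneous_C_mul_X (Δ⁻¹ * e) (0:Fin 2)).add
          (isHomogeneous_C_mul_X (-(Δ⁻¹ * a 1)) 1))
      · simpa [hv1] using ((isHomogeneous_C_mul_X (-(Δ⁻¹ * d)) (0:Fin 2)).add
          (isHomogeneous_C_mul_X (Δ⁻¹ * a 0) 1)))

lemma prime_linForm (a : Fin 2 → K) (ha : a ≠ 0) : Prime (linForm a : P) := by
  obtain ⟨σ, hX, -, -⟩ := exists_linengine a ha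
  have := (MulEquiv.prime_iff σ.toMulEquiv (p := (X 0 : P))).symm
  rw [show σ.toMulEquiv (X 0 : P) = σ (X 0) from rfl, hX] at this
  exact this.mp (prime_X_fin2 0)

lemma eval_linForm (a : Fin 2 → K) (v : Fin 2 → K) :
    eval v (linForm a : P) = a 0 * v 0 + a 1 * v 1 := by
  simp [linForm_eq]

lemma not_dvd_linForm {a b : Fin 2 → K} (ha : a ≠ 0)
    (h : ∀ t : K, b ≠ t • a) : ¬ (linForm a : P) ∣ linForm b := by
  intro ⟨w, hw⟩
  set v : Fin 2 → K := ![a 1, -(a 0)] with hv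
  have h1 : eval v (linForm a : P) = 0 := by rw [eval_linForm]; simp [hv]; ring
  have h2 : eval v (linForm b : P) = 0 := by rw [hw, map_mul, h1, zero_mul]
  rw [eval_linForm] at h2
  simp only [hv, Matrix.cons_val_zero, Matrix.cons_val_one, Matrix.head_cons] at h2
  have hkey : b 0 * a 1 = b 1 * a 0 := by linear_combination h2
  rcases eq_or_ne (a 0) 0 with h0 | h0
  · have h1' : a 1 ≠ 0 := by
      intro h1'; apply ha; funext j; fin_cases j <;> simp [h0, h1']
    have hb0 : b 0 = 0 := by
      have := hkey
      rw [h0, mul_zero] at this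
      exact (mul_eq_zero.mp this).resolve_right h1'
    apply h (b 1 / a 1)
    funext j
    fin_cases j <;> simp [hb0, h0] <;> field_simp
  · apply h (b 0 / a 0)
    funext j
    fin_cases j
    · simp only [Pi.smul_apply, smul_eq_mul]
      show b 0 = b 0 / a 0 * a 0
      field_simp
    · simp only [Pi.smul_apply, smul_eq_mul]
      show b 1 = b 0 / a 0 * a 1
      field_simp
      linear_combination -hkey

lemma isRelPrime_linForm {a b : Fin 2 → K} (ha : a ≠ 0)
    (h : ∀ t : K, b ≠ t • a) : IsRelPrime (linForm a : P) (linForm b) := by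
  intro d hda hdb
  obtain ⟨w, hw⟩ := hda
  rcases (prime_linForm a ha).irreducible.isUnit_or_isUnit hw with hu | hu
  · exact hu
  · exfalso
    apply not_dvd_linForm ha h
    obtain ⟨v, hv⟩ := hu.exists_right_inv
    have hd : d = linForm a * v := by rw [hw, mul_assoc, hv, mul_one]
    exact dvd_trans ⟨v, hd⟩ hdb

lemma homog_of_mul_homog {q h : P} {α β : ℕ} (hq : q.IsHomogeneous α) (hq0 : q ≠ 0)
    (hqh : (q * h).IsHomogeneous (α + β)) : h.IsHomogeneous β := by
  set T := h.totalDegree with hT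
  have hqh' : q * h = ∑ t ∈ Finset.range (T + 1), q * homogeneousComponent t h := by
    rw [← Finset.mul_sum, sum_homogeneousComponent]
  have hterm : ∀ t, (q * homogeneousComponent t h).IsHomogeneous (α + t) :=
    fun t => hq.mul (homogeneousComponent_isHomogeneous t h)
  have hcompsum : ∀ u : ℕ, homogeneousComponent u (q * h)
      = ∑ t ∈ Finset.range (T + 1),
        (if u = α + t then q * homogeneousComponent t h else 0) := by
    intro u
    rw [hqh', map_sum]
    refine Finset.sum_congr rfl fun t _ => ?_
    exact homogeneousComponent_of_mem (hterm t)
  have hzero : ∀ t ∈ Finset.range (T + 1), t ≠ β → q * homogeneousComponent t h = 0 := by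
    intro t htr htb
    have h1 : homogeneousComponent (α + t) (q * h) = 0 := by
      rw [homogeneousComponent_of_mem hqh]
      have : ¬ (α + t = α + β) := by omega
      simp [this, htb]
    rw [hcompsum (α + t)] at h1
    rw [Finset.sum_eq_single t (fun s _ hs => by
        have : ¬ (α + t = α + s) := by omega
        simp [this, Ne.symm hs]) (fun habs => absurd htr habs)] at h1
    simpa using h1
  have hmain : q * h = q * homogeneousComponent β h := by
    rw [hqh']
    by_cases hβ : β ∈ Finset.range (T + 1)
    · exact Finset.sum_eq_single_of_mem β hβ (fun t htr htb => hzero t htr htb)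
    · have hc : homogeneousComponent β h = 0 := by
        apply homogeneousComponent_eq_zero
        simp only [Finset.mem_range, not_lt] at hβ
        omega
      rw [hc, mul_zero]
      exact Finset.sum_eq_zero fun t htr => by
        rcases eq_or_ne t β with rfl | htb
        · rw [hc, mul_zero]
        · exact hzero t htr htb
  have : h = homogeneousComponent β h := mul_left_cancel₀ hq0 hmain
  rw [this]
  exact homogeneousComponent_isHomogeneous β h

lemma eq_C_of_isHomogeneous_zero {p : P} (hp : p.IsHomogeneous 0) :
    p = C (coeff 0 p) := by
  ext d
  rcases eq_or_ne d 0 with rfl | hd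
  · simp
  · rw [coeff_C, if_neg (by exact fun hdd => hd hdd.symm)]
    by_contra hc
    have h2 := hp hc
    have hdeg : d.degree = 0 := by
      rw [DFunLike.congr_fun Finsupp.degree_eq_weight_one d]; exact h2
    rw [Finsupp.degree_eq_zero_iff] at hdeg
    exact hd hdeg

end Aux

/-! ### Expansion of binary homogeneous polynomials in coordinates -/

noncomputable def ind2 (Dg k : ℕ) : Fin 2 →₀ ℕ :=
  Finsupp.single 0 k + Finsupp.single 1 (Dg - k)

lemma ind2_apply0 (Dg k : ℕ) : ind2 Dg k 0 = k := by
  simp [ind2, Finsupp.single_apply]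

lemma ind2_apply1 (Dg k : ℕ) : ind2 Dg k 1 = Dg - k := by
  simp [ind2, Finsupp.single_apply]

section Expand

variable {K : Type} [Field K]

local notation "P" => MvPolynomial (Fin 2) K

lemma degree_fin2 (d : Fin 2 →₀ ℕ) : d.degree = d 0 + d 1 := by
  rw [Finsupp.degree_apply]
  rw [Finset.sum_subset (Finset.subset_univ d.support)
    (fun i _ hi => by simpa using Finsupp.notMem_support_iff.mp hi)]
  exact Fin.sum_univ_two d

lemma eq_ind2 {d : Fin 2 →₀ ℕ} {Dg : ℕ} (h : d 0 + d 1 = Dg) : d = ind2 Dg (d 0) := by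
  ext j
  fin_cases j
  · show d 0 = ind2 Dg (d 0) 0
    rw [ind2_apply0]
  · show d 1 = ind2 Dg (d 0) 1
    rw [ind2_apply1]; omega

lemma mono_eq (Dg k : ℕ) : (X 0 ^ k * X 1 ^ (Dg - k) : P) = monomial (ind2 Dg k) 1 := by
  rw [X_pow_eq_monomial, X_pow_eq_monomial, monomial_mul, one_mul, ind2]

lemma mono_homog {Dg k : ℕ} (hk : k ≤ Dg) :
    (X 0 ^ k * X 1 ^ (Dg - k) : P).IsHomogeneous Dg := by
  have := (isHomogeneous_X_pow (R := K) (0 : Fin 2) k).mul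
    (isHomogeneous_X_pow (1 : Fin 2) (Dg - k))
  have hkk : k + (Dg - k) = Dg := by omega
  rwa [hkk] at this

lemma expand_homog {Dg : ℕ} {r : P} (hr : r.IsHomogeneous Dg) :
    r = ∑ k : Fin (Dg + 1),
      coeff (ind2 Dg (k : ℕ)) r • (X 0 ^ (k : ℕ) * X 1 ^ (Dg - (k : ℕ))) := by
  ext d
  rw [coeff_sum]
  have hcoefft : ∀ k : Fin (Dg + 1),
      coeff d (coeff (ind2 Dg (k : ℕ)) r • (X 0 ^ (k : ℕ) * X 1 ^ (Dg - (k : ℕ))))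
        = coeff (ind2 Dg (k : ℕ)) r * (if ind2 Dg (k : ℕ) = d then 1 else 0) := by
    intro k
    rw [coeff_smul, mono_eq, coeff_monomial, smul_eq_mul]
  rcases eq_or_ne (d 0 + d 1) Dg with hdeg | hdeg
  · have hd0 : d 0 < Dg + 1 := by omega
    rw [Finset.sum_congr rfl (fun k _ => hcoefft k),
      Finset.sum_eq_single (⟨d 0, hd0⟩ : Fin (Dg + 1))]
    · rw [if_pos (eq_ind2 hdeg).symm, mul_one, ← eq_ind2 hdeg]
    · intro k _ hk
      rw [if_neg, mul_zero]
      intro hkd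
      apply hk
      have : (k : ℕ) = d 0 := by rw [← hkd, ind2_apply0]
      exact Fin.ext this
    · intro habs
      exact absurd (Finset.mem_univ _) habs
  · have hl : coeff d r = 0 := by
      by_contra hc
      have h2 := hr hc
      have : d.degree = Dg := by rw [DFunLike.congr_fun Finsupp.degree_eq_weight_one d]; exact h2
      rw [degree_fin2] at this
      exact hdeg this
    rw [hl]
    rw [Finset.sum_congr rfl (fun k _ => hcoefft k)]
    apply (Finset.sum_eq_zero fun k _ => ?_).symm
    rw [if_neg, mul_zero]
    intro hkd
    apply hdeg
    rw [← hkd, ind2_apply0, ind2_apply1]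
    have := k.isLt
    omega

lemma dvd_of_coeffs_zero {Dg k0 : ℕ} {r : P} (hr : r.IsHomogeneous Dg)
    (h : ∀ k : Fin (Dg + 1), (k : ℕ) < k0 → coeff (ind2 Dg (k : ℕ)) r = 0) :
    (X 0 : P) ^ k0 ∣ r := by
  rw [expand_homog hr]
  apply Finset.dvd_sum
  intro k _
  rcases lt_or_ge (k : ℕ) k0 with hk | hk
  · rw [h k hk, zero_smul]
    exact dvd_zero _
  · rw [smul_eq_C_mul]
    exact Dvd.dvd.mul_left (Dvd.dvd.mul_right (pow_dvd_pow _ hk) _) _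

end Expand

/-! ### Linear parametrizations -/

noncomputable def T1 (K : Type) [Field K] (M : ℕ) :
    (Fin (M + 1) → K) →ₗ[K] MvPolynomial (Fin 2) K :=
  ∑ k : Fin (M + 1), (LinearMap.toSpanSingleton K (MvPolynomial (Fin 2) K)
    (X 0 ^ (k : ℕ) * X 1 ^ (M - (k : ℕ)))).comp (LinearMap.proj k)

noncomputable def Tmap (K : Type) [Field K] (N : ℕ) :
    ((Fin 2 × Fin (N + 1)) → K) →ₗ[K] (Fin 2 → MvPolynomial (Fin 2) K) :=
  LinearMap.pi (fun j => (T1 K N).comp (LinearMap.funLeft K K (fun k => (j, k))))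

section Lin

variable {K : Type} [Field K]

local notation "P" => MvPolynomial (Fin 2) K

lemma T1_apply (M : ℕ) (w : Fin (M + 1) → K) :
    T1 K M w = ∑ k : Fin (M + 1), w k • (X 0 ^ (k : ℕ) * X 1 ^ (M - (k : ℕ))) := by
  simp [T1, LinearMap.toSpanSingleton_apply]

lemma T1_homog (M : ℕ) (w : Fin (M + 1) → K) : (T1 K M w).IsHomogeneous M := by
  rw [T1_apply]
  apply MvPolynomial.IsHomogeneous.sum
  intro k _
  rw [smul_eq_C_mul]
  exact (mono_homog (by omega : (k:ℕ) ≤ M)).C_mul _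

lemma T1_surj {M : ℕ} {p : P} (hp : p.IsHomogeneous M) : ∃ w, T1 K M w = p := by
  refine ⟨fun k => coeff (ind2 M (k : ℕ)) p, ?_⟩
  rw [T1_apply, ← expand_homog hp]

lemma T1_coeff (M : ℕ) (w : Fin (M + 1) → K) (k : Fin (M + 1)) :
    coeff (ind2 M (k : ℕ)) (T1 K M w) = w k := by
  rw [T1_apply, coeff_sum]
  rw [Finset.sum_eq_single k]
  · rw [coeff_smul, X_pow_eq_monomial, X_pow_eq_monomial, monomial_mul, one_mul, coeff_monomial]
    simp [ind2]
  · intro k' _ hk'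
    rw [coeff_smul, X_pow_eq_monomial, X_pow_eq_monomial, monomial_mul, one_mul,
      coeff_monomial, if_neg, smul_eq_mul, mul_zero]
    intro hc
    apply hk'
    have := congrArg (fun d => d (0 : Fin 2)) hc
    simp only [ind2_apply0] at this
    apply Fin.ext
    simpa [Finsupp.single_apply] using this
  · intro h; exact absurd (Finset.mem_univ _) h

lemma Tmap_apply (N : ℕ) (u : (Fin 2 × Fin (N + 1)) → K) (j : Fin 2) :
    Tmap K N u j = T1 K N (fun k => u (j, k)) := by
  simp only [Tmap, LinearMap.pi_apply, LinearMap.comp_apply, LinearMap.funLeft_apply]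
  rfl

lemma Tmap_homog (N : ℕ) (u : (Fin 2 × Fin (N + 1)) → K) (j : Fin 2) :
    (Tmap K N u j).IsHomogeneous N := by
  rw [Tmap_apply]; exact T1_homog N _

lemma Tmap_injective (N : ℕ) : Function.Injective (Tmap K N) := by
  intro u u' h
  funext p
  obtain ⟨j, k⟩ := p
  have h1 : coeff (ind2 N (k : ℕ)) (Tmap K N u j)
      = coeff (ind2 N (k : ℕ)) (Tmap K N u' j) := by
    rw [congrFun h j]
  rwa [Tmap_apply, Tmap_apply, T1_coeff, T1_coeff] at h1

end Lin

/-! ### Saito's criterion -/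

section saito

variable {K : Type} [Field K] {n : ℕ} {c : Fin n → Fin 2 → K} {m : Fin n → ℕ}

local notation "P" => MvPolynomial (Fin 2) K

lemma pow_linForm_dvd_det {θ θ' : Fin 2 → P}
    (hθ : θ ∈ Dlog c m) (hθ' : θ' ∈ Dlog c m) (hcne : ∀ i, c i ≠ 0) (i : Fin n) :
    linForm (c i) ^ m i ∣ (θ 0 * θ' 1 - θ' 0 * θ 1) := by
  have h1 := hθ i
  have h2 := hθ' i
  rw [appL_apply] at h1 h2
  have ha : linForm (c i) ^ m i ∣ C (c i 0) * (θ 0 * θ' 1 - θ' 0 * θ 1) := by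
    have key : C (c i 0) * (θ 0 * θ' 1 - θ' 0 * θ 1)
        = θ' 1 * (C (c i 0) * θ 0 + C (c i 1) * θ 1)
          - θ 1 * (C (c i 0) * θ' 0 + C (c i 1) * θ' 1) := by ring
    rw [key]
    exact dvd_sub (h1.mul_left _) (h2.mul_left _)
  have hb : linForm (c i) ^ m i ∣ C (c i 1) * (θ 0 * θ' 1 - θ' 0 * θ 1) := by
    have key : C (c i 1) * (θ 0 * θ' 1 - θ' 0 * θ 1)
        = θ 0 * (C (c i 0) * θ' 0 + C (c i 1) * θ' 1)
          - θ' 0 * (C (c i 0) * θ 0 + C (c i 1) * θ 1) := by ring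
    rw [key]
    exact dvd_sub (h2.mul_left _) (h1.mul_left _)
  rcases eq_or_ne (c i 0) 0 with h0 | h0
  · have h1' : c i 1 ≠ 0 := by
      intro h1'; apply hcne i; funext j; fin_cases j <;> simp [h0, h1']
    have hu : IsUnit (C (c i 1) : P) := (isUnit_iff_ne_zero.mpr h1').map (C : K →+* P)
    obtain ⟨u, hu⟩ := hu
    rw [← hu] at hb
    exact (Units.dvd_mul_left).mp hb
  · have hu : IsUnit (C (c i 0) : P) := (isUnit_iff_ne_zero.mpr h0).map (C : K →+* P)
    obtain ⟨u, hu⟩ := hu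
    rw [← hu] at ha
    exact (Units.dvd_mul_left).mp ha

lemma Q_dvd_det {θ θ' : Fin 2 → P}
    (hθ : θ ∈ Dlog c m) (hθ' : θ' ∈ Dlog c m) (hcne : ∀ i, c i ≠ 0)
    (hrel : Pairwise (IsRelPrime on fun i => (linForm (c i) : P) ^ m i)) :
    (∏ i, linForm (c i) ^ m i : P) ∣ (θ 0 * θ' 1 - θ' 0 * θ 1) :=
  Fintype.prod_dvd_of_isRelPrime hrel (fun i => pow_linForm_dvd_det hθ hθ' hcne i)

lemma saito_basis {θ1 θ2 : Fin 2 → P} (h1 : θ1 ∈ Dlog c m) (h2 : θ2 ∈ Dlog c m)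
    (hcne : ∀ i, c i ≠ 0)
    (hrel : Pairwise (IsRelPrime on fun i => (linForm (c i) : P) ^ m i))
    (hQ : (∏ i, linForm (c i) ^ m i : P) ≠ 0)
    {r : K} (hr : r ≠ 0)
    (hdet : θ1 0 * θ2 1 - θ2 0 * θ1 1 = C r * ∏ i, linForm (c i) ^ m i) :
    ∃ b : Module.Basis (Fin 2) P (Dlog c m), b 0 = ⟨θ1, h1⟩ ∧ b 1 = ⟨θ2, h2⟩ := by
  set Q : P := ∏ i, linForm (c i) ^ m i with hQdef
  have hCr : (C r⁻¹ : P) * C r = 1 := by rw [← C_mul, inv_mul_cancel₀ hr, C_1]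
  have hdet0 : θ1 0 * θ2 1 - θ2 0 * θ1 1 ≠ 0 := by
    rw [hdet]
    refine mul_ne_zero ?_ hQ
    simpa using hr
  have hspan : ∀ θ : Fin 2 → P, θ ∈ Dlog c m → ∃ A B : P, θ = A • θ1 + B • θ2 := by
    intro θ hθ
    obtain ⟨A', hA'⟩ := Q_dvd_det hθ h2 hcne hrel
    obtain ⟨B', hB'⟩ := Q_dvd_det h1 hθ hcne hrel
    rw [← hQdef] at hA' hB'
    refine ⟨C r⁻¹ * A', C r⁻¹ * B', ?_⟩
    funext j
    have keyj : θ j * (θ1 0 * θ2 1 - θ2 0 * θ1 1)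
        = (θ 0 * θ2 1 - θ2 0 * θ 1) * θ1 j + (θ1 0 * θ 1 - θ 0 * θ1 1) * θ2 j := by
      fin_cases j <;> simp only [Fin.zero_eta, Fin.mk_one] <;> ring
    rw [hdet, hA', hB'] at keyj
    have hQc : Q * (C r * θ j) = Q * (A' * θ1 j + B' * θ2 j) := by linear_combination keyj
    have hcancel := mul_left_cancel₀ hQ hQc
    show θ j = C r⁻¹ * A' * θ1 j + C r⁻¹ * B' * θ2 j
    linear_combination (C r⁻¹ : P) * hcancel - θ j * hCr
  have hindep : ∀ A B : P, A • θ1 + B • θ2 = 0 → A = 0 ∧ B = 0 := by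
    intro A B hAB
    have h0 := congrFun hAB 0
    have h1' := congrFun hAB 1
    simp only [Pi.add_apply, Pi.smul_apply, smul_eq_mul, Pi.zero_apply] at h0 h1'
    have hA : A * (θ1 0 * θ2 1 - θ2 0 * θ1 1) = 0 := by
      linear_combination θ2 1 * h0 - θ2 0 * h1'
    have hA0 : A = 0 := by
      rcases mul_eq_zero.mp hA with h | h
      · exact h
      · exact absurd h hdet0
    subst hA0
    refine ⟨rfl, ?_⟩
    simp only [zero_mul, zero_add] at h0 h1'
    have hθ2ne : θ2 0 ≠ 0 ∨ θ2 1 ≠ 0 := by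
      by_contra hcon
      push_neg at hcon
      apply hdet0
      rw [hcon.1, hcon.2]
      ring
    rcases hθ2ne with h | h
    · rcases mul_eq_zero.mp h0 with hB | hB
      · exact hB
      · exact absurd hB h
    · rcases mul_eq_zero.mp h1' with hB | hB
      · exact hB
      · exact absurd hB h
  set v : Fin 2 → ↥(Dlog c m) := ![⟨θ1, h1⟩, ⟨θ2, h2⟩] with hv
  have hli : LinearIndependent P v := by
    rw [Fintype.linearIndependent_iff]
    intro g hg
    rw [Fin.sum_univ_two] at hg
    have hg' : g 0 • θ1 + g 1 • θ2 = 0 := by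
      have := congrArg (Subtype.val) hg
      simpa [hv] using this
    have := hindep _ _ hg'
    intro i
    fin_cases i
    · exact this.1
    · exact this.2
  have hsp : ⊤ ≤ Submodule.span P (Set.range v) := by
    rintro ⟨θ, hθ⟩ -
    obtain ⟨A, B, hAB⟩ := hspan θ hθ
    have heq : (⟨θ, hθ⟩ : ↥(Dlog c m)) = A • ⟨θ1, h1⟩ + B • ⟨θ2, h2⟩ := by
      apply Subtype.ext
      simpa using hAB
    rw [heq]
    exact Submodule.add_mem _
      (Submodule.smul_mem _ _ (Submodule.subset_span ⟨0, rfl⟩))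
      (Submodule.smul_mem _ _ (Submodule.subset_span ⟨1, rfl⟩))
  refine ⟨Module.Basis.mk hli hsp, ?_, ?_⟩
  · rw [Module.Basis.mk_apply]
    rfl
  · rw [Module.Basis.mk_apply]
    rfl

end saito

/-- For a 2-multiarrangement `(A,m)` with `n` lines and positive multiplicities:
if `n ≥ |m|/2 + 1` then the exponents are `(|m| − n + 1, n − 1)`. -/
theorem exponents_many_lines {K : Type} [Field K] [CharZero K] (n : ℕ)
    (c : Fin n → Fin 2 → K)
    (hne : ∀ i, c i ≠ 0)
    (hdist : ∀ i i', i ≠ i' → ∀ t : K, c i ≠ t • c i')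
    (m : Fin n → ℕ)
    (hmpos : ∀ i, 0 < m i)
    (hbig : (∑ i, m i) + 2 ≤ 2 * n) :
    ∃ b : Module.Basis (Fin 2) (MvPolynomial (Fin 2) K) (Dlog c m),
      (∀ j, ((b 0 : Fin 2 → MvPolynomial (Fin 2) K) j).IsHomogeneous
        ((∑ i, m i) - n + 1)) ∧
      (∀ j, ((b 1 : Fin 2 → MvPolynomial (Fin 2) K) j).IsHomogeneous (n - 1)) := by
  classical
  have hSn : n ≤ ∑ i, m i := by
    calc n = ∑ _i : Fin n, 1 := by simp
    _ ≤ ∑ i, m i := Finset.sum_le_sum (fun i _ => hmpos i)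
  set S := ∑ i, m i with hSdef
  have hn2 : 2 ≤ n := by omega
  set N := n - 1 with hNdef
  set d1 := S - n + 1 with hd1def
  have hd1N : d1 ≤ N := by omega
  have hmle : ∀ i, m i ≤ d1 := by
    intro i
    have h1 : m i + ∑ j ∈ Finset.univ.erase i, m j = S := by
      rw [hSdef]
      exact Finset.add_sum_erase _ m (Finset.mem_univ i)
    have h2 : (n - 1) ≤ ∑ j ∈ Finset.univ.erase i, m j := by
      calc n - 1 = ∑ _j ∈ Finset.univ.erase i, 1 := by
            rw [Finset.sum_const, smul_eq_mul, mul_one,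
              Finset.card_erase_of_mem (Finset.mem_univ i)]
            simp
      _ ≤ _ := Finset.sum_le_sum (fun j _ => hmpos j)
    omega
  -- primes and coprimality
  have hprime : ∀ i, Prime (linForm (c i) : MvPolynomial (Fin 2) K) := fun i => prime_linForm (c i) (hne i)
  have hα0 : ∀ i, (linForm (c i) : MvPolynomial (Fin 2) K) ≠ 0 := fun i => (hprime i).ne_zero
  have hrelbase : ∀ i j, i ≠ j → IsRelPrime (linForm (c i) : MvPolynomial (Fin 2) K) (linForm (c j)) :=
    fun i j hij => isRelPrime_linForm (hne i) (fun t => hdist j i (Ne.symm hij) t)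
  have hrel : Pairwise (IsRelPrime on fun i => (linForm (c i) : MvPolynomial (Fin 2) K) ^ m i) :=
    fun i j hij => (hrelbase i j hij).pow
  have hrel1 : Pairwise (IsRelPrime on fun i => (linForm (c i) : MvPolynomial (Fin 2) K) ^ (m i - 1)) :=
    fun i j hij => (hrelbase i j hij).pow
  set E : MvPolynomial (Fin 2) K := ∏ i, linForm (c i) ^ (m i - 1) with hEdef
  set Q : MvPolynomial (Fin 2) K := ∏ i, linForm (c i) ^ m i with hQdef
  have hE0 : E ≠ 0 :=
    Finset.prod_ne_zero_iff.mpr (fun i _ => pow_ne_zero _ (hα0 i))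
  have hQ0 : Q ≠ 0 :=
    Finset.prod_ne_zero_iff.mpr (fun i _ => pow_ne_zero _ (hα0 i))
  have hEhom : E.IsHomogeneous (S - n) := by
    have h1 : E.IsHomogeneous (∑ i, 1 * (m i - 1)) :=
      MvPolynomial.IsHomogeneous.prod _ _ _
        (fun i _ => (linForm_isHomogeneous (c i)).pow (m i - 1))
    have h2 : (∑ i, 1 * (m i - 1)) = S - n := by
      simp only [one_mul]
      have h3 : ∑ i, ((m i - 1) + 1) = S := by
        rw [hSdef]
        exact Finset.sum_congr rfl (fun i _ => by have := hmpos i; omega)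
      rw [Finset.sum_add_distrib] at h3
      simp only [Finset.sum_const, smul_eq_mul, mul_one, Finset.card_univ,
        Fintype.card_fin] at h3
      omega
    rwa [h2] at h1
  have hQhom : Q.IsHomogeneous S := by
    have h1 : Q.IsHomogeneous (∑ i, 1 * m i) :=
      MvPolynomial.IsHomogeneous.prod _ _ _
        (fun i _ => (linForm_isHomogeneous (c i)).pow (m i))
    have h2 : (∑ i, 1 * m i) = S := by simp [hSdef]
    rwa [h2] at h1
  -- the first basis element
  set θ1 : Fin 2 → MvPolynomial (Fin 2) K := fun j => E * X j with hθ1def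
  have hθ1hom : ∀ j, (θ1 j).IsHomogeneous d1 :=
    fun j => hEhom.mul (isHomogeneous_X _ j)
  have hθ1mem : θ1 ∈ Dlog c m := by
    intro i
    rw [appL_apply]
    have hexp : C (c i 0) * θ1 0 + C (c i 1) * θ1 1 = E * linForm (c i) := by
      show C (c i 0) * (E * X 0) + C (c i 1) * (E * X 1) = E * linForm (c i)
      rw [linForm_eq]; ring
    rw [hexp]
    obtain ⟨E', hE'⟩ : linForm (c i) ^ (m i - 1) ∣ E :=
      Finset.dvd_prod_of_mem _ (Finset.mem_univ i)
    rw [hE']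
    have hp : linForm (c i) ^ m i = linForm (c i) ^ (m i - 1) * linForm (c i) := by
      rw [← pow_succ]
      congr 1
      have := hmpos i; omega
    rw [hp]
    have : linForm (c i) ^ (m i - 1) * E' * linForm (c i)
        = (linForm (c i) ^ (m i - 1) * linForm (c i)) * E' := by ring
    rw [this]
    exact Dvd.dvd.mul_right (dvd_refl _) E'
  -- coordinates adapted to each line
  choose σ hσX hσhom hσsym using fun i : Fin n => exists_linengine (c i) (hne i)
  -- the conditions map
  set Lmap : ((Fin 2 × Fin (N + 1)) → K) →ₗ[K] (∀ i : Fin n, Fin (m i) → K) :=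
    LinearMap.pi (fun i => LinearMap.pi (fun jj : Fin (m i) =>
      (lcoeff K (ind2 N (jj : ℕ))).comp
        ((AlgHom.toLinearMap ((σ i).symm : MvPolynomial (Fin 2) K ≃ₐ[K] MvPolynomial (Fin 2) K).toAlgHom).comp
          (((appL (c i)).restrictScalars K).comp (Tmap K N))))) with hLdef
  have hLapply : ∀ (u : (Fin 2 × Fin (N + 1)) → K) (i : Fin n) (jj : Fin (m i)),
      Lmap u i jj = coeff (ind2 N (jj : ℕ)) ((σ i).symm (appL (c i) (Tmap K N u))) := by
    intro u i jj
    simp [hLdef]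
  have hkermem : ∀ u ∈ LinearMap.ker Lmap, Tmap K N u ∈ Dlog c m := by
    intro u hu i
    have hp : (appL (c i) (Tmap K N u)).IsHomogeneous N := by
      rw [appL_apply]
      exact ((Tmap_homog N u 0).C_mul _).add ((Tmap_homog N u 1).C_mul _)
    have hrhom : ((σ i).symm (appL (c i) (Tmap K N u))).IsHomogeneous N :=
      hσsym i _ _ hp
    have hcz : ∀ k : Fin (N + 1), (k : ℕ) < m i →
        coeff (ind2 N (k : ℕ)) ((σ i).symm (appL (c i) (Tmap K N u))) = 0 := by
      intro k hk
      have h0 := congrFun (congrFun (LinearMap.mem_ker.mp hu) i) (⟨(k : ℕ), hk⟩ : Fin (m i))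
      rw [hLapply] at h0
      simpa using h0
    have hdvd : (X 0 : MvPolynomial (Fin 2) K) ^ m i ∣ (σ i).symm (appL (c i) (Tmap K N u)) :=
      dvd_of_coeffs_zero hrhom hcz
    obtain ⟨w, hw⟩ := hdvd
    refine ⟨σ i w, ?_⟩
    have hmap := congrArg (σ i) hw
    rw [AlgEquiv.apply_symm_apply, map_mul, map_pow, hσX i] at hmap
    exact hmap
  -- rank computation
  have hcard : Module.finrank K ((Fin 2 × Fin (N + 1)) → K) = 2 * (N + 1) := by
    rw [Module.finrank_fintype_fun_eq_card]
    simp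
  have htar : Module.finrank K (∀ i : Fin n, Fin (m i) → K) = S := by
    rw [Module.finrank_pi_fintype]
    rw [hSdef]
    exact Finset.sum_congr rfl (fun i _ => by
      rw [Module.finrank_fintype_fun_eq_card, Fintype.card_fin])
  have hrk := LinearMap.finrank_range_add_finrank_ker Lmap
  have hrle : Module.finrank K (LinearMap.range Lmap) ≤ S := htar ▸ Submodule.finrank_le _
  rw [hcard] at hrk
  -- the multiples of θ1 in degree N
  set Zm : (Fin (N - d1 + 1) → K) →ₗ[K] (Fin 2 → MvPolynomial (Fin 2) K) :=
    ((LinearMap.toSpanSingleton (MvPolynomial (Fin 2) K) (Fin 2 → MvPolynomial (Fin 2) K) θ1).restrictScalars K).comp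
      (T1 K (N - d1)) with hZmdef
  have hZfr : Module.finrank K (LinearMap.range Zm) ≤ N - d1 + 1 := by
    refine (LinearMap.finrank_range_le Zm).trans_eq ?_
    rw [Module.finrank_fintype_fun_eq_card]
    simp
  -- find θ2
  obtain ⟨u, hker, hnZ⟩ : ∃ u, u ∈ LinearMap.ker Lmap ∧ Tmap K N u ∉ LinearMap.range Zm := by
    by_contra hcon
    push_neg at hcon
    have hle : (LinearMap.ker Lmap).map (Tmap K N) ≤ LinearMap.range Zm := by
      rintro _ ⟨u, hu, rfl⟩
      exact hcon u hu
    have hfr1 : Module.finrank K ((LinearMap.ker Lmap).map (Tmap K N))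
        = Module.finrank K (LinearMap.ker Lmap) :=
      ((Submodule.equivMapOfInjective _ (Tmap_injective N) _).finrank_eq).symm
    have hfr2 : Module.finrank K ((LinearMap.ker Lmap).map (Tmap K N)) ≤ N - d1 + 1 :=
      le_trans (Submodule.finrank_mono hle) hZfr
    omega
  set θ2 : Fin 2 → MvPolynomial (Fin 2) K := Tmap K N u with hθ2def
  have hθ2mem : θ2 ∈ Dlog c m := hkermem u hker
  have hθ2hom : ∀ j, (θ2 j).IsHomogeneous N := Tmap_homog N u
  -- nondegeneracy of the determinant
  have hdet0 : θ1 0 * θ2 1 - θ2 0 * θ1 1 ≠ 0 := by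
    intro hdd
    apply hnZ
    have hfac : E * (X 0 * θ2 1 - θ2 0 * X 1) = 0 := by
      have e0 : θ1 0 = E * X 0 := rfl
      have e1 : θ1 1 = E * X 1 := rfl
      rw [e0, e1] at hdd
      linear_combination hdd
    have h2 : X 0 * θ2 1 - θ2 0 * X 1 = 0 := by
      rcases mul_eq_zero.mp hfac with h | h
      · exact absurd h hE0
      · exact h
    have hX1dvd : (X 1 : MvPolynomial (Fin 2) K) ∣ X 0 * θ2 1 := ⟨θ2 0, by linear_combination h2⟩
    have hX1ndvd : ¬ (X 1 : MvPolynomial (Fin 2) K) ∣ X 0 := by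
      rintro ⟨w, hw⟩
      have := congrArg (eval ![(1 : K), 0]) hw
      simp at this
    have hX1θ : (X 1 : MvPolynomial (Fin 2) K) ∣ θ2 1 :=
      ((prime_X_fin2 1).2.2 _ _ hX1dvd).resolve_left hX1ndvd
    obtain ⟨h, hh⟩ := hX1θ
    have hθ20 : θ2 0 = X 0 * h := by
      apply mul_left_cancel₀ (prime_X_fin2 (1 : Fin 2)).ne_zero
      rw [hh] at h2
      linear_combination -h2
    have hEh : E ∣ h := by
      apply Fintype.prod_dvd_of_isRelPrime hrel1
      intro i
      have hmem := hθ2mem i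
      rw [appL_apply, hθ20, hh] at hmem
      have hexp : C (c i 0) * (X 0 * h) + C (c i 1) * (X 1 * h) = linForm (c i) * h := by
        rw [linForm_eq]; ring
      rw [hexp] at hmem
      have hps : linForm (c i) ^ m i = linForm (c i) * linForm (c i) ^ (m i - 1) := by
        rw [← pow_succ']
        congr 1
        have := hmpos i; omega
      rw [hps] at hmem
      exact (mul_dvd_mul_iff_left (hα0 i)).mp hmem
    obtain ⟨h', hh'⟩ := hEh
    have hθ2eq : θ2 = h' • θ1 := by
      funext j
      have ej : θ1 j = E * X j := rfl
      fin_cases j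
      · show θ2 0 = h' * θ1 0
        rw [hθ20, hh']
        show X 0 * (E * h') = h' * (E * X 0)
        ring
      · show θ2 1 = h' * θ1 1
        rw [hh, hh']
        show X 1 * (E * h') = h' * (E * X 1)
        ring
    have hEX1 : (E * X 1 : MvPolynomial (Fin 2) K) ≠ 0 := mul_ne_zero hE0 (prime_X_fin2 (1 : Fin 2)).ne_zero
    have hhom1 : ((E * X 1) * h').IsHomogeneous (d1 + (N - d1)) := by
      have hface : θ2 1 = (E * X 1) * h' := by
        rw [hh, hh']; ring
      have hNd : d1 + (N - d1) = N := by omega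
      rw [hNd, ← hface]
      exact hθ2hom 1
    have hh'hom : h'.IsHomogeneous (N - d1) :=
      homog_of_mul_homog (hEhom.mul (isHomogeneous_X _ 1)) hEX1 hhom1
    obtain ⟨w, hw⟩ := T1_surj hh'hom
    refine ⟨w, ?_⟩
    show ((LinearMap.toSpanSingleton (MvPolynomial (Fin 2) K) (Fin 2 → MvPolynomial (Fin 2) K) θ1).restrictScalars K) (T1 K (N - d1) w) = θ2
    rw [hw]
    show h' • θ1 = θ2
    rw [hθ2eq]
  -- the determinant is a scalar multiple of Q
  obtain ⟨R, hRdef⟩ := Q_dvd_det hθ1mem hθ2mem hne hrel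
  rw [← hQdef] at hRdef
  have hdethom : (θ1 0 * θ2 1 - θ2 0 * θ1 1).IsHomogeneous (S + 0) := by
    have hb : (θ2 0 * θ1 1).IsHomogeneous (d1 + N) := by
      have := (hθ2hom 0).mul (hθ1hom 1)
      rwa [show N + d1 = d1 + N by omega] at this
    have hab := ((hθ1hom 0).mul (hθ2hom 1)).sub hb
    rwa [show d1 + N = S + 0 by omega] at hab
  have hRhom : R.IsHomogeneous 0 := by
    apply homog_of_mul_homog hQhom hQ0
    rw [← hRdef]
    exact hdethom
  have hRC : R = C (coeff 0 R) := eq_C_of_isHomogeneous_zero hRhom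
  have hrne : coeff 0 R ≠ 0 := by
    intro hr0
    rw [hRC, hr0, map_zero, mul_zero] at hRdef
    -- θ1 0 * θ2 1 - θ2 0 * θ1 1 = 0 contradicts hdet0 — but hdet0 is about nonzero det
    exact hdet0 hRdef
  have hdet : θ1 0 * θ2 1 - θ2 0 * θ1 1 = C (coeff 0 R) * Q := by
    rw [hRdef, mul_comm]
    exact congrArg (fun z => z * Q) hRC
  obtain ⟨b, hb0, hb1⟩ := saito_basis hθ1mem hθ2mem hne hrel hQ0 hrne hdet
  refine ⟨b, ?_, ?_⟩
  · intro j
    rw [hb0]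
    exact hθ1hom j
  · intro j
    rw [hb1]
    exact hθ2hom j
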